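/- Let Ω ⊂ ℝ³ be bounded with Lipschitz boundary, and consider E[Q] = ∫_Ω [½|∇Q|² + λ² F̄_b(Q)] dx on H₀¹(Ω; S₀), where F̄_b(Q) = (A/2C)tr Q² − (B/3C)tr Q³ + (1/4)(tr Q²)². Fix M > 0 and let X = {Q ∈ H₀¹(Ω; S₀) : ‖Q‖_{L∞} ≤ M}. Then the second-order central difference satisfies Δ(Q,h) := E[Q+h] + E[Q−h] − 2E[Q] ≥ ∫_Ω |∇h|² dx − λ²(|A|/C + 2BM/C) ∫_Ω |h|² dx for all Q ∈ X and h ∈ H₀¹(Ω; S₀). -/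

import Mathlib

/-!
Expanding `E[Q ± h]` pointwise, the gradient term of the central difference is exactly
`|∇h|²` (parallelogram law) and the bulk term is
`(A/C) tr h² − (2B/C) tr(Q h²) + 2 (tr Qh)² + tr Q² tr h² + ½ (tr h²)²`.
The last three summands are nonnegative, and in the Frobenius norm
`tr(Q h²) ≤ |Q| |h²| ≤ |Q| |h|² ≤ M tr h²` by Cauchy–Schwarz and submultiplicativity.
-/

open MeasureTheory

/-- The reduced LdG bulk density `F̄_b(Q) = (A/2C)tr Q² − (B/3C)tr Q³ + (1/4)(tr Q²)²`. -/
noncomputable def Fbred (A B C : ℝ) (Q : Matrix (Fin 3) (Fin 3) ℝ) : ℝ :=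
  A / (2 * C) * (Q * Q).trace - B / (3 * C) * (Q * Q * Q).trace
    + (1 / 4) * (Q * Q).trace ^ 2

/-- `|∇Q|² = Σ_{k,i,j} |∂_k Q^{ij}|²`. -/
noncomputable def gradsq (Qf : (Fin 3 → ℝ) → Matrix (Fin 3) (Fin 3) ℝ)
    (x : Fin 3 → ℝ) : ℝ :=
  ∑ k : Fin 3, ∑ i : Fin 3, ∑ j : Fin 3,
    (fderiv ℝ (fun y => Qf y i j) x (Pi.single k 1)) ^ 2

/-- The energy `E[Q] = ∫_Ω [½|∇Q|² + λ² F̄_b(Q)] dx`. -/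
noncomputable def Eldg (Ω : Set (Fin 3 → ℝ)) (lam A B C : ℝ)
    (Qf : (Fin 3 → ℝ) → Matrix (Fin 3) (Fin 3) ℝ) : ℝ :=
  ∫ x in Ω, ((1 / 2) * gradsq Qf x + lam ^ 2 * Fbred A B C (Qf x))

attribute [local instance] Matrix.frobeniusNormedAddCommGroup

namespace Matrix

section Trace

variable {n R : Type*} [Fintype n] [CommRing R]

lemma trace_mul_self_add (Q h : Matrix n n R) :
    ((Q + h) * (Q + h)).trace = (Q * Q).trace + 2 * (Q * h).trace + (h * h).trace := by
  simp only [add_mul, mul_add, trace_add, trace_mul_comm h Q]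
  ring

lemma trace_mul_self_sub (Q h : Matrix n n R) :
    ((Q - h) * (Q - h)).trace = (Q * Q).trace - 2 * (Q * h).trace + (h * h).trace := by
  simpa [sub_eq_add_neg] using trace_mul_self_add Q (-h)

lemma trace_cube_add_add_trace_cube_sub (Q h : Matrix n n R) :
    ((Q + h) * (Q + h) * (Q + h)).trace + ((Q - h) * (Q - h) * (Q - h)).trace
      = 2 * (Q * Q * Q).trace + 6 * (Q * (h * h)).trace := by
  simp only [add_mul, mul_add, sub_mul, mul_sub, trace_add, trace_sub]
  rw [trace_mul_cycle h Q h, trace_mul_cycle h h Q, Matrix.mul_assoc Q h h]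
  ring

end Trace

section Frobenius

variable {m n : Type*} [Fintype m] [Fintype n]

lemma frobenius_norm_eq_sqrt (A : Matrix m n ℝ) : ‖A‖ = √(∑ i, ∑ j, A i j ^ 2) := by
  simp [frobenius_norm_def, Real.sqrt_eq_rpow]

lemma frobenius_norm_sq (A : Matrix m n ℝ) : ‖A‖ ^ 2 = ∑ i, ∑ j, A i j ^ 2 := by
  rw [frobenius_norm_eq_sqrt, Real.sq_sqrt (by positivity)]

lemma trace_mul_le_frobenius_norm_mul (A : Matrix m n ℝ) (B : Matrix n m ℝ) :
    (A * B).trace ≤ ‖A‖ * ‖B‖ := by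
  have h := Real.sum_mul_le_sqrt_mul_sqrt Finset.univ (fun p : m × n => A p.1 p.2)
    (fun p => Bᵀ p.1 p.2)
  simp only [Fintype.sum_prod_type] at h
  rw [← frobenius_norm_transpose B, frobenius_norm_eq_sqrt, frobenius_norm_eq_sqrt]
  simpa only [trace, diag, mul_apply, transpose_apply] using h

lemma IsSymm.trace_mul_self {A : Matrix n n ℝ} (hA : A.IsSymm) :
    (A * A).trace = ‖A‖ ^ 2 := by
  simp only [frobenius_norm_sq, trace, diag, mul_apply]
  exact Finset.sum_congr rfl fun i _ => Finset.sum_congr rfl fun j _ => by rw [hA.apply i j, sq]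

lemma IsSymm.trace_mul_mul_self_le {Q h : Matrix n n ℝ} (hh : h.IsSymm) :
    (Q * (h * h)).trace ≤ ‖Q‖ * (h * h).trace :=
  calc (Q * (h * h)).trace ≤ ‖Q‖ * ‖h * h‖ := trace_mul_le_frobenius_norm_mul Q (h * h)
    _ ≤ ‖Q‖ * ‖h‖ ^ 2 := by
        rw [sq]; exact mul_le_mul_of_nonneg_left (frobenius_norm_mul h h) (norm_nonneg Q)
    _ = ‖Q‖ * (h * h).trace := by rw [hh.trace_mul_self]

end Frobenius

end Matrix

open Matrix

lemma Fbred_add_add_Fbred_sub (A B C : ℝ) (Q h : Matrix (Fin 3) (Fin 3) ℝ) :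
    Fbred A B C (Q + h) + Fbred A B C (Q - h) - 2 * Fbred A B C Q
      = A / C * (h * h).trace - 2 * B / C * (Q * (h * h)).trace + 2 * (Q * h).trace ^ 2
        + (Q * Q).trace * (h * h).trace + 1 / 2 * (h * h).trace ^ 2 := by
  have hcube := trace_cube_add_add_trace_cube_sub Q h
  simp only [Fbred, trace_mul_self_add, trace_mul_self_sub]
  linear_combination (-B / (3 * C)) * hcube

lemma Fbred_add_add_Fbred_sub_ge {A B C M : ℝ} (hC : 0 < C) (hB : 0 ≤ B)
    {Q h : Matrix (Fin 3) (Fin 3) ℝ} (hQ : Q.IsSymm) (hh : h.IsSymm) (hQM : ‖Q‖ ≤ M) :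
    -((|A| / C + 2 * B * M / C) * (h * h).trace)
      ≤ Fbred A B C (Q + h) + Fbred A B C (Q - h) - 2 * Fbred A B C Q := by
  rw [Fbred_add_add_Fbred_sub]
  have htr : 0 ≤ (h * h).trace := hh.trace_mul_self ▸ sq_nonneg ‖h‖
  have hAC : -|A| / C ≤ A / C := div_le_div_of_nonneg_right (neg_abs_le A) hC.le
  have hQhh : (Q * (h * h)).trace ≤ M * (h * h).trace :=
    hh.trace_mul_mul_self_le.trans (mul_le_mul_of_nonneg_right hQM htr)
  have hBC : 0 ≤ 2 * B / C := by positivity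
  have hQtr : 0 ≤ (Q * Q).trace := hQ.trace_mul_self ▸ sq_nonneg ‖Q‖
  linear_combination mul_le_mul_of_nonneg_right hAC htr + mul_le_mul_of_nonneg_left hQhh hBC
    + 2 * sq_nonneg (Q * h).trace + mul_nonneg hQtr htr + 1 / 2 * sq_nonneg (h * h).trace

lemma gradsq_add_add_gradsq_sub {Qf hf : (Fin 3 → ℝ) → Matrix (Fin 3) (Fin 3) ℝ}
    {x : Fin 3 → ℝ}
    (hQ : ∀ i j, DifferentiableAt ℝ (fun y => Qf y i j) x)
    (hh : ∀ i j, DifferentiableAt ℝ (fun y => hf y i j) x) :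
    gradsq (fun y => Qf y + hf y) x + gradsq (fun y => Qf y - hf y) x
      = 2 * gradsq Qf x + 2 * gradsq hf x := by
  have hterm : ∀ k i j : Fin 3,
      fderiv ℝ (fun y => (Qf y + hf y) i j) x (Pi.single k 1) ^ 2
        + fderiv ℝ (fun y => (Qf y - hf y) i j) x (Pi.single k 1) ^ 2
      = 2 * fderiv ℝ (fun y => Qf y i j) x (Pi.single k 1) ^ 2
        + 2 * fderiv ℝ (fun y => hf y i j) x (Pi.single k 1) ^ 2 := by
    intro k i j
    simp only [Matrix.add_apply, Matrix.sub_apply, fderiv_fun_add (hQ i j) (hh i j),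
      fderiv_fun_sub (hQ i j) (hh i j), _root_.add_apply, _root_.sub_apply]
    ring
  simp only [gradsq, Finset.mul_sum, ← Finset.sum_add_distrib, hterm]

lemma continuous_gradsq {Qf : (Fin 3 → ℝ) → Matrix (Fin 3) (Fin 3) ℝ}
    (hQ : ∀ i j, ContDiff ℝ 1 fun y => Qf y i j) : Continuous (gradsq Qf) := by
  unfold gradsq
  fun_prop (disch := exact ((hQ _ _).continuous_fderiv one_ne_zero))

lemma continuous_Fbred (A B C : ℝ) : Continuous (Fbred A B C) := by
  unfold Fbred
  fun_prop

lemma Continuous.integrableOn_of_isBounded {X E : Type*} [PseudoMetricSpace X] [ProperSpace X]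
    [MeasurableSpace X] [OpensMeasurableSpace X] {μ : Measure X} [IsLocallyFiniteMeasure μ]
    [NormedAddCommGroup E] {f : X → E} (hf : Continuous f) {s : Set X}
    (hs : Bornology.IsBounded s) : IntegrableOn f s μ :=
  (hf.locallyIntegrable.integrableOn_isCompact hs.isCompact_closure).mono_set subset_closure

/-- The integrand of `Eldg`. -/
noncomputable def energyDensity (lam A B C : ℝ)
    (Qf : (Fin 3 → ℝ) → Matrix (Fin 3) (Fin 3) ℝ) (x : Fin 3 → ℝ) : ℝ :=
  1 / 2 * gradsq Qf x + lam ^ 2 * Fbred A B C (Qf x)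

lemma integrableOn_energyDensity {Ω : Set (Fin 3 → ℝ)} (hΩ : Bornology.IsBounded Ω)
    (lam A B C : ℝ) {Qf : (Fin 3 → ℝ) → Matrix (Fin 3) (Fin 3) ℝ}
    (hQ : ∀ i j, ContDiff ℝ 1 fun y => Qf y i j) :
    IntegrableOn (energyDensity lam A B C Qf) Ω :=
  Continuous.integrableOn_of_isBounded ((continuous_const.mul (continuous_gradsq hQ)).add <|
    continuous_const.mul <|
      (continuous_Fbred A B C).comp (continuous_matrix fun i j => (hQ i j).continuous)) hΩ

lemma energyDensity_add_add_energyDensity_sub_ge {lam A B C M : ℝ} (hC : 0 < C) (hB : 0 ≤ B)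
    {Qf hf : (Fin 3 → ℝ) → Matrix (Fin 3) (Fin 3) ℝ} {x : Fin 3 → ℝ}
    (hQ : ∀ i j, DifferentiableAt ℝ (fun y => Qf y i j) x)
    (hh : ∀ i j, DifferentiableAt ℝ (fun y => hf y i j) x)
    (hQs : (Qf x).IsSymm) (hhs : (hf x).IsSymm) (hQM : ‖Qf x‖ ≤ M) :
    gradsq hf x - lam ^ 2 * (|A| / C + 2 * B * M / C) * (hf x * hf x).trace
      ≤ energyDensity lam A B C (fun y => Qf y + hf y) x
        + energyDensity lam A B C (fun y => Qf y - hf y) x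
        - 2 * energyDensity lam A B C Qf x := by
  have hgrad := gradsq_add_add_gradsq_sub hQ hh
  have hbulk := Fbred_add_add_Fbred_sub_ge (A := A) hC hB hQs hhs hQM
  unfold energyDensity
  linear_combination -hgrad / 2 + mul_le_mul_of_nonneg_left hbulk (sq_nonneg lam)

theorem stmt6_general (Ω : Set (Fin 3 → ℝ)) (hΩm : MeasurableSet Ω)
    (hΩb : Bornology.IsBounded Ω)
    (A B C lam M : ℝ) (hC : 0 < C) (hB : 0 < B)
    (Qf hf : (Fin 3 → ℝ) → Matrix (Fin 3) (Fin 3) ℝ)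
    (hQreg : ∀ i j, ContDiff ℝ 1 fun y => Qf y i j)
    (hhreg : ∀ i j, ContDiff ℝ 1 fun y => hf y i j)
    (hQS : ∀ x, (Qf x).IsSymm ∧ (Qf x).trace = 0)
    (hhS : ∀ x, (hf x).IsSymm ∧ (hf x).trace = 0)
    (hQbd : ∀ x ∈ Ω, Real.sqrt ((Qf x * Qf x).trace) ≤ M) :
    (∫ x in Ω, gradsq hf x)
        - lam ^ 2 * (|A| / C + 2 * B * M / C) * ∫ x in Ω, (hf x * hf x).trace
      ≤ Eldg Ω lam A B C (fun x => Qf x + hf x)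
          + Eldg Ω lam A B C (fun x => Qf x - hf x)
          - 2 * Eldg Ω lam A B C Qf := by
  have hQM : ∀ x ∈ Ω, ‖Qf x‖ ≤ M := fun x hx => by
    simpa [(hQS x).1.trace_mul_self] using hQbd x hx
  have hplus := integrableOn_energyDensity hΩb lam A B C (Qf := fun y => Qf y + hf y)
    fun i j => (hQreg i j).add (hhreg i j)
  have hminus := integrableOn_energyDensity hΩb lam A B C (Qf := fun y => Qf y - hf y)
    fun i j => (hQreg i j).sub (hhreg i j)
  have hcenter := (integrableOn_energyDensity hΩb lam A B C hQreg).const_mul 2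
  have hgrad := (continuous_gradsq hhreg).integrableOn_of_isBounded hΩb (μ := volume)
  have hhc : Continuous hf := continuous_matrix fun i j => (hhreg i j).continuous
  have htr := ((hhc.matrix_mul hhc).matrix_trace.integrableOn_of_isBounded hΩb
    (μ := volume)).const_mul (lam ^ 2 * (|A| / C + 2 * B * M / C))
  calc _ = ∫ x in Ω, (gradsq hf x
          - lam ^ 2 * (|A| / C + 2 * B * M / C) * (hf x * hf x).trace) := by
        rw [integral_sub hgrad htr, integral_const_mul]
    _ ≤ ∫ x in Ω, (energyDensity lam A B C (fun y => Qf y + hf y) x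
          + energyDensity lam A B C (fun y => Qf y - hf y) x
          - 2 * energyDensity lam A B C Qf x) :=
        setIntegral_mono_on (hgrad.sub htr) ((hplus.add hminus).sub hcenter) hΩm fun x hx =>
          energyDensity_add_add_energyDensity_sub_ge hC hB.le
            (fun i j => (hQreg i j).differentiable one_ne_zero x)
            (fun i j => (hhreg i j).differentiable one_ne_zero x) (hQS x).1 (hhS x).1 (hQM x hx)
    _ = _ := by
        rw [integral_sub _ hcenter, integral_add hplus hminus, integral_const_mul]
        · rfl
        · exact hplus.add hminus

/-- Convexity estimate: for `Q` in `X = {‖Q‖_{L∞} ≤ M}` (Frobenius norm, pointwise on `Ω`)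
and any `h`, both valued in the symmetric traceless matrices, the second-order central
difference of `E` satisfies
`E[Q+h] + E[Q−h] − 2E[Q] ≥ ∫_Ω |∇h|² − λ²(|A|/C + 2BM/C) ∫_Ω |h|²`. -/
theorem stmt6 (Ω : Set (Fin 3 → ℝ)) (hΩm : MeasurableSet Ω)
    (hΩb : Bornology.IsBounded Ω)
    (A B C lam M : ℝ) (hC : 0 < C) (hB : 0 < B) (hlam : 0 < lam) (hM : 0 < M)
    (Qf hf : (Fin 3 → ℝ) → Matrix (Fin 3) (Fin 3) ℝ)
    (hQreg : ∀ i j, ContDiff ℝ 1 fun y => Qf y i j)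
    (hhreg : ∀ i j, ContDiff ℝ 1 fun y => hf y i j)
    (hQS : ∀ x, (Qf x).IsSymm ∧ (Qf x).trace = 0)
    (hhS : ∀ x, (hf x).IsSymm ∧ (hf x).trace = 0)
    (hQbd : ∀ x ∈ Ω, Real.sqrt ((Qf x * Qf x).trace) ≤ M) :
    (∫ x in Ω, gradsq hf x)
        - lam ^ 2 * (|A| / C + 2 * B * M / C) * ∫ x in Ω, (hf x * hf x).trace
      ≤ Eldg Ω lam A B C (fun x => Qf x + hf x)
          + Eldg Ω lam A B C (fun x => Qf x - hf x)
          - 2 * Eldg Ω lam A B C Qf :=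
  stmt6_general Ω hΩm hΩb A B C lam M hC hB Qf hf hQreg hhreg hQS hhS hQbd
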